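/- arXiv:1302.6862 — 3 statements merged into one kernel-verified Lean document; each statement's English description precedes it below -/
import Mathlib

section
/- A real 4×4 matrix ξ with tr ξ = 0 satisfies ξ·α_L¹ = 0 and ξ·α_L³ = 0 (where (ξ·α)(u,v) = α(ξu, v) + α(u, ξv) is the infinitesimal pullback action on alternating 2-forms) if and only if ξ lies in the 6-dimensional real span of the six matrices ξ₁, …, ξ₆; in particular this solution space has dimension 6 and (ξ₁,…,ξ₆) is a basis of it. -/
/-!
Work in `V = ℝ⁴` (as `Fin 4 → ℝ`) with standard basis `e i` and dual basis
`ω i`.  Alternating `k`-forms are `V [⋀^Fin k]→ₗ[ℝ] ℝ`; `wedgeF` is the wedge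
product (shuffle convention), `vol4 = ω¹∧ω²∧ω³∧ω⁴`, `pairF` is the pairing
`⟨·,·⟩` on `Λ²V*` determined by `α ∧ β = ⟨α,β⟩ ω¹∧ω²∧ω³∧ω⁴`, and `pullF g α`
is the pullback `(g*α)(u,v) = α (g u) (g v)`.
-/

noncomputable section

abbrev V4 : Type := Fin 4 → ℝ

/-- The wedge product of real-valued alternating forms. -/
noncomputable def wedgeF {M : Type} [AddCommGroup M] [Module ℝ M] {a b : ℕ}
    (f : M [⋀^Fin a]→ₗ[ℝ] ℝ) (g : M [⋀^Fin b]→ₗ[ℝ] ℝ) :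
    M [⋀^Fin (a + b)]→ₗ[ℝ] ℝ :=
  ((TensorProduct.lid ℝ ℝ).toLinearMap.compAlternatingMap
    (f.domCoprod g)).domDomCongr finSumFinEquiv

/-- The coordinate 1-forms `ωⁱ` (as alternating 1-forms). -/
noncomputable def dl {n : ℕ} (i : Fin n) : (Fin n → ℝ) [⋀^Fin 1]→ₗ[ℝ] ℝ :=
  AlternatingMap.ofSubsingleton ℝ (Fin n → ℝ) ℝ 0 (LinearMap.proj i)

/-- `ωⁱ ∧ ωʲ` as an alternating 2-form on `ℝ⁴`. -/
noncomputable def ww (i j : Fin 4) : V4 [⋀^Fin 2]→ₗ[ℝ] ℝ := wedgeF (dl i) (dl j)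

/-- The volume form `ω¹∧ω²∧ω³∧ω⁴` on `ℝ⁴`. -/
noncomputable def vol4 : V4 [⋀^Fin 4]→ₗ[ℝ] ℝ := wedgeF (ww 0 1) (ww 2 3)

/-- The standard basis vectors. -/
noncomputable def ev {n : ℕ} (i : Fin n) : Fin n → ℝ := Pi.single i 1

/-- The pairing `⟨α,β⟩` on `Λ²(ℝ⁴)*`, characterized by
`α ∧ β = ⟨α,β⟩ ω¹∧ω²∧ω³∧ω⁴` (defined here as the value of `α ∧ β` on the
standard basis, on which the volume form takes the value `1`). -/
noncomputable def pairF (α β : V4 [⋀^Fin 2]→ₗ[ℝ] ℝ) : ℝ :=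
  wedgeF α β ![ev 0, ev 1, ev 2, ev 3]

/-- Pullback of an alternating form along a linear map:
`(g*α)(v₁,…,v_k) = α (g v₁) … (g v_k)`. -/
noncomputable def pullF {k : ℕ} (g : V4 →ₗ[ℝ] V4) (α : V4 [⋀^Fin k]→ₗ[ℝ] ℝ) :
    V4 [⋀^Fin k]→ₗ[ℝ] ℝ := α.compLinearMap g

/-- The matrices `ξ₁, …, ξ₆` (1-indexed entries as in the paper). -/
noncomputable def ξm : Fin 6 → Matrix (Fin 4) (Fin 4) ℝ :=
  ![!![1, 0, 0, 0; 0, -1, 0, 0; 0, 0, 1, 0; 0, 0, 0, -1],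
    !![0, 0, 0, 0; 0, 0, 1, 0; 0, 0, 0, 0; 1, 0, 0, 0],
    !![0, 1, 0, 0; 0, 0, 0, 0; 0, 0, 0, -1; 0, 0, 0, 0],
    !![0, 0, 1, 0; 0, 0, 0, 1; -1, 0, 0, 0; 0, -1, 0, 0],
    !![0, 0, 0, 0; -1, 0, 0, 0; 0, 0, 0, 0; 0, 0, 1, 0],
    !![0, 0, 0, 1; 0, 0, 0, 0; 0, 1, 0, 0; 0, 0, 0, 0]]

/-- `α_L¹ = ω¹∧ω² + ω³∧ω⁴`. -/
noncomputable def αL1 : V4 [⋀^Fin 2]→ₗ[ℝ] ℝ := ww 0 1 + ww 2 3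

/-- `α_L³ = ω¹∧ω⁴ + ω²∧ω³`. -/
noncomputable def αL3 : V4 [⋀^Fin 2]→ₗ[ℝ] ℝ := ww 0 3 + ww 1 2


set_option maxHeartbeats 1000000 in
private lemma mk''_inj {σ τ : Equiv.Perm (Fin 1 ⊕ Fin 1)}
    (h : (Quotient.mk'' σ : Equiv.Perm.ModSumCongr (Fin 1) (Fin 1)) = Quotient.mk'' τ) :
    σ = τ := by
  rw [Quotient.eq''] at h
  obtain ⟨⟨p, q⟩, hp⟩ := QuotientGroup.leftRel_apply.mp h
  have h1 : (Equiv.Perm.sumCongrHom (Fin 1) (Fin 1)) (p, q) = 1 := by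
    have hp1 : p = 1 := Subsingleton.elim _ _
    have hq1 : q = 1 := Subsingleton.elim _ _
    simp [hp1, hq1]
  rw [h1] at hp
  have h2 : σ⁻¹ * τ = 1 := hp.symm
  calc σ = σ * (σ⁻¹ * τ) := by rw [h2, mul_one]
  _ = τ := by group

private lemma univ_perm : (Finset.univ : Finset (Equiv.Perm (Fin 1 ⊕ Fin 1))) =
    {1, Equiv.swap (Sum.inl 0) (Sum.inr 0)} := by decide

set_option maxHeartbeats 1000000 in
set_option synthInstance.maxHeartbeats 200000 in
private lemma ww_apply (i j : Fin 4) (u v : V4) :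
    ww i j ![u, v] = u i * v j - u j * v i := by
  simp only [ww, wedgeF, AlternatingMap.domDomCongr_apply,
    LinearMap.compAlternatingMap_apply, AlternatingMap.domCoprod_apply,
    AlternatingMap.coe_mk, MultilinearMap.sum_apply, map_sum]
  have key : ∀ (g : Equiv.Perm.ModSumCongr (Fin 1) (Fin 1) → ℝ),
      ∑ q : Equiv.Perm.ModSumCongr (Fin 1) (Fin 1), g q =
        g (Quotient.mk'' 1) + g (Quotient.mk'' (Equiv.swap (Sum.inl 0) (Sum.inr 0))) := by
    intro g
    have hbij : Function.Bijective
        (Quotient.mk'' : Equiv.Perm (Fin 1 ⊕ Fin 1) → Equiv.Perm.ModSumCongr (Fin 1) (Fin 1)) :=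
      ⟨fun a b h => mk''_inj h, Quot.mk_surjective⟩
    letI I1 : Fintype (Equiv.Perm.ModSumCongr (Fin 1) (Fin 1)) := inferInstance
    rw [Fintype.sum_equiv (ι := Equiv.Perm.ModSumCongr (Fin 1) (Fin 1))
      (κ := Equiv.Perm (Fin 1 ⊕ Fin 1)) (Equiv.ofBijective _ hbij).symm g
      (fun σ => g (Quotient.mk'' σ))
      (fun q => (congrArg g ((Equiv.ofBijective _ hbij).apply_symm_apply q)).symm)]
    rw [univ_perm, Finset.sum_insert (by decide), Finset.sum_singleton]
  rw [key]
  simp only [AlternatingMap.domCoprod.summand_mk'', MultilinearMap.domDomCongr_apply,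
    MultilinearMap.domCoprod_apply, Equiv.Perm.sign_one, one_smul, Equiv.Perm.sign_swap
    (by decide : (Sum.inl 0 : Fin 1 ⊕ Fin 1) ≠ Sum.inr 0)]
  simp only [MultilinearMap.smul_apply, MultilinearMap.domDomCongr_apply,
    MultilinearMap.domCoprod_apply, map_smul, TensorProduct.lid_tmul, dl,
    LinearMap.proj_apply]
  simp [Equiv.swap_apply_def, Function.comp, finSumFinEquiv,
    show (Fin.castAdd 1 (0 : Fin 1) : Fin 2) = 0 from rfl,
    show (Fin.natAdd 1 (0 : Fin 1) : Fin 2) = 1 from rfl]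
  ring

private lemma αL1_apply (u v : V4) :
    αL1 ![u, v] = u 0 * v 1 - u 1 * v 0 + u 2 * v 3 - u 3 * v 2 := by
  simp [αL1, ww_apply]; ring

private lemma αL3_apply (u v : V4) :
    αL3 ![u, v] = u 0 * v 3 - u 3 * v 0 + u 1 * v 2 - u 2 * v 1 := by
  simp [αL3, ww_apply]; ring

private lemma xm0 : ξm 0 = !![1, 0, 0, 0; 0, -1, 0, 0; 0, 0, 1, 0; 0, 0, 0, -1] := rfl
private lemma xm1 : ξm 1 = !![0, 0, 0, 0; 0, 0, 1, 0; 0, 0, 0, 0; 1, 0, 0, 0] := rfl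
private lemma xm2 : ξm 2 = !![0, 1, 0, 0; 0, 0, 0, 0; 0, 0, 0, -1; 0, 0, 0, 0] := rfl
private lemma xm3 : ξm 3 = !![0, 0, 1, 0; 0, 0, 0, 1; -1, 0, 0, 0; 0, -1, 0, 0] := rfl
private lemma xm4 : ξm 4 = !![0, 0, 0, 0; -1, 0, 0, 0; 0, 0, 0, 0; 0, 0, 1, 0] := rfl
private lemma xm5 : ξm 5 = !![0, 0, 0, 1; 0, 0, 0, 0; 0, 1, 0, 0; 0, 0, 0, 0] := rfl

private lemma mulVec_ev (ξ : Matrix (Fin 4) (Fin 4) ℝ) (a : Fin 4) :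
    ξ.mulVec (ev a) = fun i => ξ i a := by
  ext i; simp [ev, Matrix.mulVec_single]

set_option maxHeartbeats 4000000 in
/-- a traceless real 4×4 matrix `ξ` satisfies `ξ·α_L¹ = 0` and
`ξ·α_L³ = 0` (infinitesimal pullback action `(ξ·α)(u,v) = α(ξu,v) + α(u,ξv)`)
iff it lies in the span of `ξ₁,…,ξ₆`; this space is 6-dimensional with basis
`(ξ₁,…,ξ₆)`. -/
theorem stmt_9 :
    LinearIndependent ℝ ξm ∧
    Module.finrank ℝ (Submodule.span ℝ (Set.range ξm)) = 6 ∧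
    ∀ ξ : Matrix (Fin 4) (Fin 4) ℝ,
      (ξ.trace = 0 ∧
        (∀ u v : V4, αL1 ![ξ.mulVec u, v] + αL1 ![u, ξ.mulVec v] = 0) ∧
        (∀ u v : V4, αL3 ![ξ.mulVec u, v] + αL3 ![u, ξ.mulVec v] = 0)) ↔
      ξ ∈ Submodule.span ℝ (Set.range ξm) := by
  have hli : LinearIndependent ℝ ξm := by
    rw [Fintype.linearIndependent_iff]
    intro g hg i
    have h := fun a b => congrFun (congrFun hg a) b
    fin_cases i
    · have := h 0 0; simpa [Fin.sum_univ_six, xm0, xm1, xm2, xm3, xm4, xm5] using this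
    · have := h 3 0
      simp [Fin.sum_univ_six, xm0, xm1, xm2, xm3, xm4, xm5, Matrix.vecHead, Matrix.vecTail] at this
      simpa using this
    · have := h 0 1; simpa [Fin.sum_univ_six, xm0, xm1, xm2, xm3, xm4, xm5] using this
    · have := h 0 2; simpa [Fin.sum_univ_six, xm0, xm1, xm2, xm3, xm4, xm5] using this
    · have h2 := h 1 0
      simp [Fin.sum_univ_six, xm0, xm1, xm2, xm3, xm4, xm5, Matrix.vecHead, Matrix.vecTail] at h2
      simp only [show ((⟨4, by norm_num⟩ : Fin 6)) = (4 : Fin 6) from rfl]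
      linarith
    · have := h 0 3; simpa [Fin.sum_univ_six, xm0, xm1, xm2, xm3, xm4, xm5] using this
  refine ⟨hli, ?_, ?_⟩
  · rw [finrank_span_eq_card hli]; simp
  intro ξ
  constructor
  · rintro ⟨-, h1, h3⟩
    have P1 : ∀ u v : V4, (ξ.mulVec u) 0 * v 1 - (ξ.mulVec u) 1 * v 0 +
        (ξ.mulVec u) 2 * v 3 - (ξ.mulVec u) 3 * v 2 +
        (u 0 * (ξ.mulVec v) 1 - u 1 * (ξ.mulVec v) 0 +
        u 2 * (ξ.mulVec v) 3 - u 3 * (ξ.mulVec v) 2) = 0 := by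
      intro u v; have := h1 u v; rwa [αL1_apply, αL1_apply] at this
    have P3 : ∀ u v : V4, (ξ.mulVec u) 0 * v 3 - (ξ.mulVec u) 3 * v 0 +
        (ξ.mulVec u) 1 * v 2 - (ξ.mulVec u) 2 * v 1 +
        (u 0 * (ξ.mulVec v) 3 - u 3 * (ξ.mulVec v) 0 +
        u 1 * (ξ.mulVec v) 2 - u 2 * (ξ.mulVec v) 1) = 0 := by
      intro u v; have := h3 u v; rwa [αL3_apply, αL3_apply] at this
    have Q1 : ∀ a b : Fin 4, (ξ 0 a) * (ev b 1) - (ξ 1 a) * (ev b 0) +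
        (ξ 2 a) * (ev b 3) - (ξ 3 a) * (ev b 2) +
        (ev a 0 * ξ 1 b - ev a 1 * ξ 0 b + ev a 2 * ξ 3 b - ev a 3 * ξ 2 b) = 0 := by
      intro a b; have := P1 (ev a) (ev b); rwa [mulVec_ev, mulVec_ev] at this
    have Q3 : ∀ a b : Fin 4, (ξ 0 a) * (ev b 3) - (ξ 3 a) * (ev b 0) +
        (ξ 1 a) * (ev b 2) - (ξ 2 a) * (ev b 1) +
        (ev a 0 * ξ 3 b - ev a 3 * ξ 0 b + ev a 1 * ξ 2 b - ev a 2 * ξ 1 b) = 0 := by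
      intro a b; have := P3 (ev a) (ev b); rwa [mulVec_ev, mulVec_ev] at this
    have A1 := Q1 0 1; have A2 := Q1 0 2; have A3 := Q1 0 3
    have A4 := Q1 1 2; have A5 := Q1 1 3
    have B1 := Q3 0 1; have B2 := Q3 0 2; have B3 := Q3 0 3
    have B4 := Q3 1 2; have B5 := Q3 1 3
    simp [ev, Pi.single_apply] at A1 A2 A3 A4 A5 B1 B2 B3 B4 B5
    have hξ : ξ = ξ 0 0 • ξm 0 + ξ 3 0 • ξm 1 + ξ 0 1 • ξm 2 +
        (-(ξ 2 0)) • ξm 3 + (-(ξ 1 0)) • ξm 4 + ξ 2 1 • ξm 5 := by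
      ext a b
      fin_cases a <;> fin_cases b <;>
        simp [xm0, xm1, xm2, xm3, xm4, xm5, Matrix.vecHead, Matrix.vecTail] <;> linarith [A1, A2, A3, A4, A5, B1, B2, B3, B4, B5]
    rw [hξ]
    have mem : ∀ i : Fin 6, ξm i ∈ Submodule.span ℝ (Set.range ξm) :=
      fun i => Submodule.subset_span ⟨i, rfl⟩
    exact Submodule.add_mem _ (Submodule.add_mem _ (Submodule.add_mem _ (Submodule.add_mem _
      (Submodule.add_mem _ (Submodule.smul_mem _ _ (mem 0)) (Submodule.smul_mem _ _ (mem 1)))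
      (Submodule.smul_mem _ _ (mem 2))) (Submodule.smul_mem _ _ (mem 3)))
      (Submodule.smul_mem _ _ (mem 4))) (Submodule.smul_mem _ _ (mem 5))
  · intro hmem
    induction hmem using Submodule.span_induction with
    | mem x hx =>
      obtain ⟨i, rfl⟩ := hx
      fin_cases i <;>
        refine ⟨by simp [Matrix.trace, Matrix.diag, xm0, xm1, xm2, xm3, xm4, xm5,
            Fin.sum_univ_four, Matrix.vecHead, Matrix.vecTail], fun u v => ?_, fun u v => ?_⟩ <;>
        simp only [αL1_apply, αL3_apply] <;>
        simp [xm0, xm1, xm2, xm3, xm4, xm5, Matrix.mulVec, dotProduct,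
          Fin.sum_univ_four, Matrix.vecHead, Matrix.vecTail] <;> ring
    | zero => exact ⟨by simp, fun u v => by simp [αL1_apply], fun u v => by simp [αL3_apply]⟩
    | add x y hx hy ihx ihy =>
      obtain ⟨tx, hx1, hx3⟩ := ihx
      obtain ⟨ty, hy1, hy3⟩ := ihy
      refine ⟨by simp [Matrix.trace_add, tx, ty], fun u v => ?_, fun u v => ?_⟩
      · have e1 := hx1 u v; have e3 := hy1 u v
        rw [αL1_apply, αL1_apply] at e1 e3 ⊢
        simp only [Matrix.add_mulVec, Pi.add_apply] at *
        linarith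
      · have e1 := hx3 u v; have e3 := hy3 u v
        rw [αL3_apply, αL3_apply] at e1 e3 ⊢
        simp only [Matrix.add_mulVec, Pi.add_apply] at *
        linarith
    | smul c x hx ihx =>
      obtain ⟨tx, hx1, hx3⟩ := ihx
      refine ⟨by simp [Matrix.trace_smul, tx], fun u v => ?_, fun u v => ?_⟩
      · have e1 := hx1 u v
        rw [αL1_apply, αL1_apply] at e1 ⊢
        simp only [Matrix.smul_mulVec, Pi.smul_apply, smul_eq_mul]
        linear_combination c * e1
      · have e1 := hx3 u v
        rw [αL3_apply, αL3_apply] at e1 ⊢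
        simp only [Matrix.smul_mulVec, Pi.smul_apply, smul_eq_mul]
        linear_combination c * e1
end
end

section
/- Let A, B, C, E₁, E₂, F : ℝ⁵ → ℝ be functions, let γ be any map from ℝ⁵ to alternating 1-forms on ℝ⁵, and define the 2-form Ψ on ℝ⁵ (coordinates (x¹,x²,z,p₁,p₂)) by Ψ = A dp₁∧dp₂ + B dp₁∧dx² + C dx¹∧dp₂ + E₁ dp₁∧dx¹ + E₂ dp₂∧dx² + F dx¹∧dx² + θ∧γ. Then for every C² function u : ℝ² → ℝ and every x ∈ ℝ², the pullback of Ψ along j¹u at x equals [A(j¹u(x))(u₁₁u₂₂ − u₁₂²) + B(j¹u(x)) u₁₁ + C(j¹u(x)) u₂₂ + (E₂(j¹u(x)) − E₁(j¹u(x))) u₁₂ + F(j¹u(x))] dx¹∧dx², where u_{ij} = ∂²u/∂xⁱ∂xʲ(x). In particular (j¹u)*Ψ = 0 at x if and only if u satisfies the corresponding second-order Monge–Ampère equation at x. -/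
/-!
Covectors at a point of `ℝ⁵` with coordinates `(x¹,x²,z,p₁,p₂)`
(indexed `0,1,2,3,4`): `dl 0 = dx¹`, `dl 1 = dx²`, `dl 2 = dz`, `dl 3 = dp₁`,
`dl 4 = dp₂`.  `wedgeF` is the wedge product of alternating forms.
-/

noncomputable section

abbrev V5 : Type := Fin 5 → ℝ

/-- The contact form `θ = dz − p₁dx¹ − p₂dx²` at the point `m ∈ ℝ⁵`. -/
noncomputable def θf (m : V5) : V5 [⋀^Fin 1]→ₗ[ℝ] ℝ :=
  dl 2 - m 3 • dl 0 - m 4 • dl 1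

/-- The 2-form
`Ψ = A dp₁∧dp₂ + B dp₁∧dx² + C dx¹∧dp₂ + E₁ dp₁∧dx¹ + E₂ dp₂∧dx² + F dx¹∧dx² + θ∧γ`
at the point `m ∈ ℝ⁵`, where `γ` is an arbitrary 1-form valued map. -/
noncomputable def Ψf (A B C E1 E2 F : V5 → ℝ) (γ : V5 → (V5 [⋀^Fin 1]→ₗ[ℝ] ℝ))
    (m : V5) : V5 [⋀^Fin 2]→ₗ[ℝ] ℝ :=
  A m • wedgeF (dl 3) (dl 4) + B m • wedgeF (dl 3) (dl 1) +
  C m • wedgeF (dl 0) (dl 4) + E1 m • wedgeF (dl 3) (dl 0) +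
  E2 m • wedgeF (dl 4) (dl 1) + F m • wedgeF (dl 0) (dl 1) +
  wedgeF (θf m) (γ m)

/-- The 1-jet prolongation `j¹u : ℝ² → ℝ⁵`,
`j¹u(x) = (x¹, x², u(x), ∂u/∂x¹(x), ∂u/∂x²(x))`. -/
noncomputable def j1 (u : (Fin 2 → ℝ) → ℝ) (y : Fin 2 → ℝ) : V5 :=
  ![y 0, y 1, u y,
    fderiv ℝ u y (Pi.single 0 1), fderiv ℝ u y (Pi.single 1 1)]


/-!
The differential of `j¹u` at `x` sends `s ∈ ℝ²` to `(s, du(s), Hess u · s)`. The contact form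
vanishes on such vectors, because the `z`-component `du(s)` equals `p₁s¹ + p₂s²` at `j¹u(x)`,
so `θ∧γ` pulls back to zero. Each remaining term pulls back to a `2 × 2` minor of the matrix with
rows `s`, `t`, `Hess u · s`, `Hess u · t` times `s¹t² − s²t¹`; the minors come out as the entries
and the determinant of the Hessian because its two mixed partials agree (`u` is `C²`).
-/

open Equiv in
theorem wedgeF_apply_one_one {M : Type} [AddCommGroup M] [Module ℝ M]
    (f g : M [⋀^Fin 1]→ₗ[ℝ] ℝ) (v : Fin 2 → M) :
    wedgeF f g v = f ![v 0] * g ![v 1] - f ![v 1] * g ![v 0] := by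
  -- with `1! * 1! = 1`, the wedge is the alternatization over the two permutations of `Fin 1 ⊕ Fin 1`
  have h := MultilinearMap.domCoprod_alternization_eq f g
  simp only [Fintype.card_unique, Nat.factorial_one, mul_one, one_smul] at h
  have huniv : (Finset.univ : Finset (Perm (Fin 1 ⊕ Fin 1))) =
      {1, swap (Sum.inl 0) (Sum.inr 0)} := by decide
  simp only [wedgeF, AlternatingMap.domDomCongr_apply, LinearMap.compAlternatingMap_apply, ← h,
    MultilinearMap.alternatization_apply, huniv]
  rw [Finset.sum_pair (by decide)]
  simp only [Perm.sign_one, Perm.sign_swap', reduceCtorEq, ↓reduceIte, one_smul, Units.neg_smul,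
    MultilinearMap.domDomCongr_apply, MultilinearMap.domCoprod_apply, Perm.coe_one, id_eq,
    Function.comp_apply, AlternatingMap.coe_multilinearMap, LinearEquiv.coe_coe, map_add, map_neg,
    TensorProduct.lid_tmul, smul_eq_mul]
  rw [← sub_eq_add_neg]
  congr 3 <;> funext i <;> fin_cases i <;> rfl

theorem dl_apply {n : ℕ} (i : Fin n) (v : Fin n → ℝ) : dl i ![v] = v i := rfl

/-- The image of `s` under the differential of the 1-jet graph of a function whose 1-jet at the
base point is `m` and whose Hessian there is `(u₁₁ u₁₂; u₁₂ u₂₂)`. -/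
def jetPlaneVec (m : V5) (u11 u12 u22 : ℝ) (s : Fin 2 → ℝ) : V5 :=
  ![s 0, s 1, s 0 * m 3 + s 1 * m 4, s 0 * u11 + s 1 * u12, s 0 * u12 + s 1 * u22]

theorem θf_apply_jetPlaneVec (m : V5) (u11 u12 u22 : ℝ) (s : Fin 2 → ℝ) :
    θf m ![jetPlaneVec m u11 u12 u22 s] = 0 := by
  simp only [θf, AlternatingMap.sub_apply, AlternatingMap.smul_apply, dl_apply, jetPlaneVec]
  simp only [Matrix.cons_val, Matrix.cons_val_zero, Matrix.cons_val_one, smul_eq_mul]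
  ring

theorem Ψf_apply_jetPlaneVec (A B C E1 E2 F : V5 → ℝ) (γ : V5 → (V5 [⋀^Fin 1]→ₗ[ℝ] ℝ))
    (m : V5) (u11 u12 u22 : ℝ) (s t : Fin 2 → ℝ) :
    Ψf A B C E1 E2 F γ m ![jetPlaneVec m u11 u12 u22 s, jetPlaneVec m u11 u12 u22 t] =
      (A m * (u11 * u22 - u12 ^ 2) + B m * u11 + C m * u22 + (E2 m - E1 m) * u12 + F m) *
        (s 0 * t 1 - s 1 * t 0) := by
  simp only [Ψf, AlternatingMap.add_apply, AlternatingMap.smul_apply, smul_eq_mul,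
    wedgeF_apply_one_one, Matrix.cons_val_zero, Matrix.cons_val_one, θf_apply_jetPlaneVec,
    dl_apply, zero_mul]
  simp only [jetPlaneVec, Matrix.cons_val]
  ring

theorem forall_mul_det_eq_zero_iff (c : ℝ) :
    (∀ s t : Fin 2 → ℝ, c * (s 0 * t 1 - s 1 * t 0) = 0) ↔ c = 0 :=
  ⟨fun h => by simpa using h (Pi.single 0 1) (Pi.single 1 1), fun h s t => by simp [h]⟩

theorem ContinuousLinearMap.apply_eq_fin_two (L : (Fin 2 → ℝ) →L[ℝ] ℝ) (s : Fin 2 → ℝ) :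
    L s = s 0 * L (Pi.single 0 1) + s 1 * L (Pi.single 1 1) := by
  conv_lhs => rw [show s = s 0 • Pi.single 0 1 + s 1 • Pi.single 1 1 by ext i; fin_cases i <;> simp]
  rw [map_add, map_smul, map_smul, smul_eq_mul, smul_eq_mul]

/-- `partial2 u x i j = ∂ᵢ(∂ⱼu)(x)`, the derivative in direction `eᵢ` of the `j`-th partial. -/
def partial2 (u : (Fin 2 → ℝ) → ℝ) (x : Fin 2 → ℝ) (i j : Fin 2) : ℝ :=
  fderiv ℝ (fun y => fderiv ℝ u y (Pi.single j 1)) x (Pi.single i 1)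

theorem partial2_comm {u : (Fin 2 → ℝ) → ℝ} {x : Fin 2 → ℝ} (hu : ContDiffAt ℝ 2 u x)
    (i j : Fin 2) : partial2 u x i j = partial2 u x j i := by
  have hd : DifferentiableAt ℝ (fderiv ℝ u) x :=
    (hu.fderiv_right le_rfl).differentiableAt one_ne_zero
  simp only [partial2, fderiv_clm_apply hd (differentiableAt_const _), fderiv_fun_const,
    Pi.zero_apply, ContinuousLinearMap.comp_zero, zero_add, ContinuousLinearMap.flip_apply]
  exact (hu.isSymmSndFDerivAt (by simp)).eq _ _

theorem fderiv_j1_apply {u : (Fin 2 → ℝ) → ℝ} {x : Fin 2 → ℝ} (hu : DifferentiableAt ℝ u x)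
    (hu' : DifferentiableAt ℝ (fderiv ℝ u) x) (s : Fin 2 → ℝ) :
    fderiv ℝ (j1 u) x s = ![s 0, s 1, fderiv ℝ u x s,
      fderiv ℝ (fun y => fderiv ℝ u y (Pi.single 0 1)) x s,
      fderiv ℝ (fun y => fderiv ℝ u y (Pi.single 1 1)) x s] := by
  have hpartial (v : Fin 2 → ℝ) : DifferentiableAt ℝ (fun y => fderiv ℝ u y v) x :=
    hu'.clm_apply (differentiableAt_const v)
  have hcoord (i : Fin 2) : DifferentiableAt ℝ (fun y : Fin 2 → ℝ => y i) x :=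
    differentiableAt_apply i x
  change fderiv ℝ (fun y i => j1 u y i) x s = _
  rw [fderiv_pi fun i => by fin_cases i <;> simp [j1, *]]
  ext i
  fin_cases i <;> simp [j1, (hasFDerivAt_apply _ x).fderiv]

theorem fderiv_j1_apply_eq_jetPlaneVec {u : (Fin 2 → ℝ) → ℝ} {x : Fin 2 → ℝ}
    (hu : ContDiffAt ℝ 2 u x) (s : Fin 2 → ℝ) :
    fderiv ℝ (j1 u) x s =
      jetPlaneVec (j1 u x) (partial2 u x 0 0) (partial2 u x 0 1) (partial2 u x 1 1) s := by
  have hd : DifferentiableAt ℝ (fderiv ℝ u) x :=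
    (hu.fderiv_right le_rfl).differentiableAt one_ne_zero
  have h10 := partial2_comm hu 1 0
  simp only [partial2] at h10
  rw [fderiv_j1_apply (hu.differentiableAt two_ne_zero) hd]
  ext i
  fin_cases i <;> simp [jetPlaneVec, j1, partial2, ContinuousLinearMap.apply_eq_fin_two _ s, h10]

/-- for a C² function `u : ℝ² → ℝ`, the pullback of `Ψ` along
`j¹u` at `x` equals
`[A(u₁₁u₂₂ − u₁₂²) + B u₁₁ + C u₂₂ + (E₂ − E₁)u₁₂ + F] dx¹∧dx²` (coefficients
evaluated at `j¹u(x)`); in particular it vanishes iff `u` satisfies the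
corresponding Monge–Ampère equation at `x`. -/
theorem stmt_15 (A B C E1 E2 F : V5 → ℝ) (γ : V5 → (V5 [⋀^Fin 1]→ₗ[ℝ] ℝ))
    (u : (Fin 2 → ℝ) → ℝ) (hu : ContDiff ℝ 2 u) (x : Fin 2 → ℝ)
    (u11 u12 u22 : ℝ)
    (h11 : u11 = fderiv ℝ (fun y => fderiv ℝ u y (Pi.single 0 1)) x (Pi.single 0 1))
    (h12 : u12 = fderiv ℝ (fun y => fderiv ℝ u y (Pi.single 1 1)) x (Pi.single 0 1))
    (h22 : u22 = fderiv ℝ (fun y => fderiv ℝ u y (Pi.single 1 1)) x (Pi.single 1 1)) :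
    (∀ s t : Fin 2 → ℝ,
      Ψf A B C E1 E2 F γ (j1 u x)
          ![fderiv ℝ (j1 u) x s, fderiv ℝ (j1 u) x t] =
        (A (j1 u x) * (u11 * u22 - u12 ^ 2) + B (j1 u x) * u11 +
            C (j1 u x) * u22 + (E2 (j1 u x) - E1 (j1 u x)) * u12 +
            F (j1 u x)) * (s 0 * t 1 - s 1 * t 0)) ∧
    ((∀ s t : Fin 2 → ℝ,
        Ψf A B C E1 E2 F γ (j1 u x)
          ![fderiv ℝ (j1 u) x s, fderiv ℝ (j1 u) x t] = 0) ↔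
      A (j1 u x) * (u11 * u22 - u12 ^ 2) + B (j1 u x) * u11 +
          C (j1 u x) * u22 + (E2 (j1 u x) - E1 (j1 u x)) * u12 +
          F (j1 u x) = 0) := by
  change u11 = partial2 u x 0 0 at h11
  change u12 = partial2 u x 0 1 at h12
  change u22 = partial2 u x 1 1 at h22
  set m := j1 u x
  set c := A m * (u11 * u22 - u12 ^ 2) + B m * u11 + C m * u22 + (E2 m - E1 m) * u12 + F m
  have pullback (s t : Fin 2 → ℝ) :
      Ψf A B C E1 E2 F γ m ![fderiv ℝ (j1 u) x s, fderiv ℝ (j1 u) x t] =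
        c * (s 0 * t 1 - s 1 * t 0) := by
    rw [fderiv_j1_apply_eq_jetPlaneVec hu.contDiffAt s,
      fderiv_j1_apply_eq_jetPlaneVec hu.contDiffAt t, Ψf_apply_jetPlaneVec, ← h11, ← h12, ← h22]
  exact ⟨pullback, by simp only [pullback, forall_mul_det_eq_zero_iff]⟩
end
end

section
/- For X = (x⁰,x¹,x²) ∈ ℝ³ define the real 3×4 matrix M(X) = [[−x⁰, 0, 0, 0], [0, −x¹, −x², 0], [−x², x², 0, −x¹]]. Then: (a) M(−1,−1,0) has rank 3, so the maximum of rank M(X) over X ∈ ℝ³ equals 3; (b) for X = (−1,−1,0) and Y = (0,0,−1), the 6×4 matrix obtained by stacking M(X) on top of M(Y) has rank 4, so the maximum over (X,Y) of the rank of the stacked matrix equals 4. (Consequently the reduced Cartan characters are s′₁ = 3, s′₂ = 1, s′₃ = 0, and s′₁ + 2s′₂ + 3s′₃ = 5 > 4.) -/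
noncomputable section

/-- The 3×4 matrix family `M(X)` from the elliptic Monge–Ampère equivalence
problem. -/
noncomputable def Mrow (X : Fin 3 → ℝ) : Matrix (Fin 3) (Fin 4) ℝ :=
  !![-X 0, 0, 0, 0;
     0, -X 1, -X 2, 0;
     -X 2, X 2, 0, -X 1]

lemma Mrow_rank3 : (Mrow ![-1, -1, 0]).rank = 3 := by
  have hsurj : Function.Surjective (Mrow ![-1, -1, 0]).mulVecLin := by
    intro y
    refine ⟨![y 0, y 1, 0, y 2], ?_⟩
    funext i
    fin_cases i <;>
      simp [Mrow, Matrix.mulVecLin, Matrix.mulVec, dotProduct,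
        Fin.sum_univ_succ]
  rw [Matrix.rank, LinearMap.range_eq_top.mpr hsurj]
  simp

lemma stacked_rank4 :
    (Matrix.fromRows (Mrow ![-1, -1, 0]) (Mrow ![0, 0, -1])).rank = 4 := by
  set A := Matrix.fromRows (Mrow ![-1, -1, 0]) (Mrow ![0, 0, -1]) with hA
  have hinj : Function.Injective A.mulVecLin := by
    rw [← LinearMap.ker_eq_bot, LinearMap.ker_eq_bot']
    intro v hv
    have h0 : A.mulVec v (Sum.inl 0) = 0 := by rw [← Matrix.mulVecLin_apply, hv]; rfl
    have h1 : A.mulVec v (Sum.inl 1) = 0 := by rw [← Matrix.mulVecLin_apply, hv]; rfl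
    have h2 : A.mulVec v (Sum.inl 2) = 0 := by rw [← Matrix.mulVecLin_apply, hv]; rfl
    have h3 : A.mulVec v (Sum.inr 1) = 0 := by rw [← Matrix.mulVecLin_apply, hv]; rfl
    simp [hA, Mrow, Matrix.mulVec, dotProduct, Fin.sum_univ_succ] at h0 h1 h2 h3
    have h2' : v 3 = 0 := h2
    funext i
    fin_cases i <;> simp_all
  have := LinearMap.finrank_range_add_finrank_ker A.mulVecLin
  rw [LinearMap.ker_eq_bot.mpr hinj] at this
  simp only [finrank_bot, add_zero] at this
  rw [Matrix.rank, this]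
  simp

/-- (a) `M(−1,−1,0)` has rank 3 and `3` is the maximum of
`rank M(X)`; (b) the stacked matrix of `M(−1,−1,0)` and `M(0,0,−1)` has rank 4
and `4` is the maximum rank of stacked matrices.  Consequently the reduced
Cartan characters are `s′₁ = 3, s′₂ = 1, s′₃ = 0` and
`s′₁ + 2s′₂ + 3s′₃ = 5 > 4`. -/
theorem stmt_17 :
    (Mrow ![-1, -1, 0]).rank = 3 ∧
    IsGreatest {r : ℕ | ∃ X : Fin 3 → ℝ, (Mrow X).rank = r} 3 ∧
    (Matrix.fromRows (Mrow ![-1, -1, 0]) (Mrow ![0, 0, -1])).rank = 4 ∧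
    IsGreatest {r : ℕ | ∃ X Y : Fin 3 → ℝ,
      (Matrix.fromRows (Mrow X) (Mrow Y)).rank = r} 4 ∧
    (3 + 2 * 1 + 3 * 0 : ℕ) = 5 ∧ (5 : ℕ) > 4 := by
  refine ⟨Mrow_rank3, ⟨⟨_, Mrow_rank3⟩, ?_⟩, stacked_rank4,
    ⟨⟨_, _, stacked_rank4⟩, ?_⟩, rfl, by norm_num⟩
  · rintro r ⟨X, rfl⟩
    simpa using (Mrow X).rank_le_card_height
  · rintro r ⟨X, Y, rfl⟩
    simpa using (Matrix.fromRows (Mrow X) (Mrow Y)).rank_le_card_width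
end
end
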